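/- arXiv:1103.5283 — 8 statements merged into one kernel-verified Lean document; each statement's English description precedes it below -/
import Mathlib

section
/- Let m be a natural number and let H be a formal power series over ℚ in one variable u satisfying H · (1 − u · H^m) = 1 (equivalently, H = (1 − u·H^m)^{-1}). Then for every k ≥ 0 the coefficient of u^k in H equals (1/(m·k+1)) · binomial((m+1)·k, k). In particular this functional equation has exactly one solution in ℚ[[u]]. -/
/-!
The Raney numbers `A_k(p, r) = r / (p k + r) * C(p k + r, k)` satisfy the Pascal-type recurrence
`A_{k+1}(p, r+1) = A_{k+1}(p, r) + A_k(p, r+p)`, i.e. their generating series `R_r` satisfy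
`R_{r+1} = R_r + X R_{r+p}`. Induction on the degree turns this into `R_{r+s} = R_r R_s`, so
`R_r = R_1 ^ r` and `R_1 = 1 + X R_1 ^ p`; for `p = m + 1` this is the functional equation, and
`A_k(m+1, 1)` is the claimed coefficient. Solutions are unique since `f - g = X (f^n - g^n)`
is `f - g` times a power series with zero constant term.
-/

open PowerSeries

theorem PowerSeries.sub_X_mul_pow_injective (R : Type*) [CommRing R] (n : ℕ) :
    Function.Injective fun f : R⟦X⟧ => f - X * f ^ n := by
  intro f g hfg
  obtain ⟨c, hc⟩ := sub_dvd_pow_sub_pow f g n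
  have hunit : IsUnit (1 - X * c) := by
    simp [isUnit_iff_constantCoeff]
  have : (f - g) * (1 - X * c) = 0 := by
    simp only at hfg
    linear_combination hfg + X * hc
  exact sub_eq_zero.mp ((hunit.mul_left_eq_zero).mp this)

/-- The branch `k = 0` avoids the junk value `0 / 0` at `r = 0`. -/
noncomputable def raney (p r k : ℕ) : ℚ :=
  if k = 0 then 1 else (r : ℚ) / (p * k + r : ℕ) * (p * k + r).choose k

theorem raney_zero (p r : ℕ) : raney p r 0 = 1 := if_pos rfl

theorem raney_zero_succ (p k : ℕ) : raney p 0 (k + 1) = 0 := by simp [raney]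

theorem raney_succ_succ {p : ℕ} (hp : 0 < p) (r k : ℕ) :
    raney p (r + 1) (k + 1) = raney p r (k + 1) + raney p (r + p) k := by
  obtain ⟨n, hn⟩ : ∃ n, p * k + p + r = n := ⟨_, rfl⟩
  have hn0 : (n : ℚ) ≠ 0 := by
    have : 0 < n := by rw [← hn]; omega
    positivity
  have hlast : raney p (r + p) k = (r + p : ℚ) / n * n.choose k := by
    rcases eq_or_ne k 0 with rfl | hk
    · have : ((r + p : ℕ) : ℚ) = n := by rw [← hn]; ring_nf
      simp only [raney_zero, Nat.choose_zero_right, Nat.cast_one, mul_one]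
      push_cast at this
      rw [this, div_self hn0]
    · rw [raney, if_neg hk, show p * k + (r + p) = n by omega]
      push_cast
      ring
  have hkn : k ≤ n := by rw [← hn]; nlinarith
  have hchoose₁ : ((n + 1 : ℕ).choose (k + 1) : ℚ) * (k + 1) = (n + 1) * n.choose k := by
    exact_mod_cast (Nat.add_one_mul_choose_eq n k).symm
  have hchoose₂ : (n.choose (k + 1) : ℚ) * (k + 1) = n.choose k * (n - k) := by
    rw [← Nat.cast_sub hkn]
    exact_mod_cast Nat.choose_succ_right_eq n k
  rw [hlast, raney, raney, if_neg k.succ_ne_zero, if_neg k.succ_ne_zero,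
    show p * (k + 1) + (r + 1) = n + 1 by rw [← hn]; ring,
    show p * (k + 1) + r = n by rw [← hn]; ring]
  have hn' : (n : ℚ) = p * k + p + r := by rw [← hn]; push_cast; ring
  have hk1 : (k + 1 : ℚ) ≠ 0 := by positivity
  rw [← mul_div_cancel_right₀ ((n + 1 : ℕ).choose (k + 1) : ℚ) hk1,
    ← mul_div_cancel_right₀ (n.choose (k + 1) : ℚ) hk1, hchoose₁, hchoose₂]
  field_simp
  push_cast
  rw [hn']
  ring

theorem raney_one (m k : ℕ) :
    raney (m + 1) 1 k = 1 / (m * k + 1) * ((m + 1) * k).choose k := by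
  rcases eq_or_ne k 0 with rfl | hk
  · simp [raney_zero]
  have hchoose : (((m + 1) * k).choose k : ℚ) * ((m + 1) * k + 1) =
      ((m + 1) * k + 1 : ℕ).choose k * (m * k + 1) := by
    have h := Nat.choose_mul_succ_eq ((m + 1) * k) k
    rw [show (m + 1) * k + 1 - k = m * k + 1 by rw [add_mul, one_mul]; omega] at h
    exact_mod_cast h
  rw [raney, if_neg hk]
  field_simp
  push_cast at hchoose ⊢
  linear_combination -hchoose

noncomputable def raneySeries (p r : ℕ) : ℚ⟦X⟧ := mk (raney p r)

theorem raneySeries_zero (p : ℕ) : raneySeries p 0 = 1 := by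
  ext (_ | k) <;> simp [raneySeries, raney_zero, raney_zero_succ, coeff_one]

theorem raneySeries_succ {p : ℕ} (hp : 0 < p) (r : ℕ) :
    raneySeries p (r + 1) = raneySeries p r + X * raneySeries p (r + p) := by
  ext (_ | k) <;> simp [raneySeries, raney_zero, raney_succ_succ hp]

theorem raneySeries_add {p : ℕ} (hp : 0 < p) (r s : ℕ) :
    raneySeries p (r + s) = raneySeries p r * raneySeries p s := by
  ext k
  induction k generalizing r with
  | zero => simp [raneySeries, raney_zero]
  | succ k ihk =>
    induction r with
    | zero => simp [raneySeries_zero]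
    | succ r ihr =>
      rw [add_right_comm, raneySeries_succ hp, raneySeries_succ hp, add_mul, mul_assoc,
        map_add, map_add, coeff_succ_X_mul, coeff_succ_X_mul, ihr, add_right_comm, ihk]

theorem raneySeries_eq_pow {p : ℕ} (hp : 0 < p) (r : ℕ) :
    raneySeries p r = raneySeries p 1 ^ r := by
  induction r with
  | zero => exact raneySeries_zero p
  | succ r ih => rw [raneySeries_add hp, ih, pow_succ]

theorem raneySeries_one_eq {p : ℕ} (hp : 0 < p) :
    raneySeries p 1 = 1 + X * raneySeries p 1 ^ p := by
  rw [← raneySeries_eq_pow hp]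
  simpa [raneySeries_zero] using raneySeries_succ hp 0

/-- For `H ∈ ℚ[[u]]` satisfying `H · (1 − u·H^m) = 1`, the coefficient of `u^k` in `H`
equals `(1/(m·k+1)) · binom((m+1)·k, k)`; in particular the functional equation has
exactly one solution. -/
theorem central_slope_coeff_formula (m : ℕ) :
    (∀ H : PowerSeries ℚ, H * (1 - PowerSeries.X * H ^ m) = 1 →
      ∀ k : ℕ, PowerSeries.coeff (R := ℚ) k H =
        (1 / (m * k + 1) : ℚ) * (Nat.choose ((m + 1) * k) k : ℚ)) ∧
    (∃! H : PowerSeries ℚ, H * (1 - PowerSeries.X * H ^ m) = 1) := by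
  set G := raneySeries (m + 1) 1
  have hG : G * (1 - X * G ^ m) = 1 := by
    linear_combination raneySeries_one_eq m.add_one_pos
  have h_eq_G (H : ℚ⟦X⟧) (hH : H * (1 - X * H ^ m) = 1) : H = G :=
    sub_X_mul_pow_injective ℚ (m + 1) (by linear_combination hH - hG)
  refine ⟨fun H hH k => ?_, ⟨G, hG, h_eq_G⟩⟩
  rw [h_eq_G H hH]
  exact (coeff_mk _ _).trans (raney_one m k)
end

section
/- Let l1, l2 ≥ 2 be integers, set m = l1·l2 − l1 − l2, and let H be a formal power series over ℚ in one variable u satisfying H · (1 − u · H^m) = 1. Set f = H^{l1·l2}. Then in ℚ[[u]] one has the identity u · f′ = g · f, where f′ is the formal derivative of f and g = ∑_{k ≥ 1} l1·l2 · binomial((l1−1)·(l2−1)·k − 1, k−1) · u^k. -/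
/-!
The hypothesis reads `H = 1 + u H^(m+1)`, so `H` is a Fuss–Catalan series and Lagrange inversion
gives the coefficients of its powers as Raney numbers. With these, `G = ∑ binom((m+1)k+m, k) u^k`
satisfies `G (1 - (m+1) u H^m) = H^m`, while differentiating the functional equation gives
`H' (1 - (m+1) u H^m) = H^(m+1)`. Hence `u H' = u G H`, so `u (H^n)' = n u G H^n` for all `n`;
and since `(l1-1)(l2-1) = m+1`, `g = l1 l2 u G`.
-/

open PowerSeries
open scoped Nat

/-- The Raney number `A_k(p+1, b+1) = (b+1)/((p+1)k+b+1) · binom((p+1)k+b+1, k)`. -/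
def raneyNumber (p b k : ℕ) : ℚ := (b + 1) * ((p + 1) * k + b)! / (k ! * (p * k + b + 1)!)

theorem raneyNumber_zero (p b : ℕ) : raneyNumber p b 0 = 1 := by
  simp only [raneyNumber, Nat.mul_zero, Nat.zero_add, Nat.factorial_zero, Nat.factorial_succ]
  push_cast
  field_simp

theorem raneyNumber_zero_succ (p k : ℕ) : raneyNumber p 0 (k + 1) = raneyNumber p p k := by
  simp only [raneyNumber, show (p + 1) * (k + 1) + 0 = (p + 1) * k + p + 1 by ring,
    show p * (k + 1) + 0 + 1 = p * k + p + 1 by ring, Nat.factorial_succ]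
  push_cast
  field_simp
  ring

theorem raneyNumber_succ_succ (p b k : ℕ) :
    raneyNumber p (b + 1) (k + 1) = raneyNumber p b (k + 1) + raneyNumber p (b + p + 1) k := by
  simp only [raneyNumber, show (p + 1) * k + (b + p + 1) = (p + 1) * (k + 1) + b by ring,
    show p * k + (b + p + 1) + 1 = p * (k + 1) + b + 1 + 1 by ring,
    show (p + 1) * (k + 1) + (b + 1) = (p + 1) * (k + 1) + b + 1 by ring,
    show p * (k + 1) + (b + 1) + 1 = p * (k + 1) + b + 1 + 1 by ring, Nat.factorial_succ]
  push_cast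
  field_simp
  ring

theorem add_mul_raneyNumber_eq_mul_choose (p k : ℕ) :
    (p + 1 + p * k) * raneyNumber p p k = (p + 1) * ((p + 1) * k + p).choose k := by
  have hle : k ≤ (p + 1) * k + p := by nlinarith
  rw [raneyNumber, Nat.cast_choose ℚ hle,
    show (p + 1) * k + p - k = p * k + p by rw [add_mul, one_mul]; omega,
    show p * k + p + 1 = (p * k + p) + 1 by ring, Nat.factorial_succ]
  push_cast
  field_simp
  ring

namespace PowerSeries

section CommRing

variable {R : Type*} [CommRing R]

theorem coeff_X_mul_derivative (f : R⟦X⟧) (k : ℕ) :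
    coeff k (X * d⁄dX R f) = k * coeff k f := by
  rcases k with _ | k
  · simp
  · rw [coeff_succ_X_mul, coeff_derivative, mul_comm, Nat.cast_succ]

theorem X_mul_derivative_pow {F T : R⟦X⟧} (h : X * d⁄dX R F = T * F) (n : ℕ) :
    X * d⁄dX R (F ^ n) = (n : R⟦X⟧) * T * F ^ n := by
  induction n with
  | zero => simp
  | succ n ih =>
    rw [pow_succ, Derivation.leibniz, smul_eq_mul, smul_eq_mul]
    push_cast
    linear_combination F * ih + F ^ n * h

theorem derivative_mul_one_sub_eq_pow {p : ℕ} {H : R⟦X⟧} (hH : H = 1 + X * H ^ (p + 1)) :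
    d⁄dX R H * (1 - (p + 1 : R⟦X⟧) * X * H ^ p) = H ^ (p + 1) := by
  have h := congrArg (d⁄dX R) hH
  rw [map_add, derivative_one, Derivation.leibniz, derivative_X, derivative_pow] at h
  simp only [smul_eq_mul, add_tsub_cancel_right] at h
  push_cast at h
  linear_combination h

variable (R) in
noncomputable def chooseSeries (p : ℕ) : R⟦X⟧ := mk fun k => (((p + 1) * k + p).choose k : R)

theorem mk_ite_mul_choose_eq (p : ℕ) (c : R) :
    (mk fun k => if k = 0 then 0 else c * (((p + 1) * k - 1).choose (k - 1) : R)) =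
      C c * X * chooseSeries R p := by
  ext k
  rcases k with _ | k
  · simp
  · rw [mul_assoc, coeff_C_mul, coeff_succ_X_mul, chooseSeries, coeff_mk, coeff_mk,
      if_neg k.succ_ne_zero, Nat.add_sub_cancel,
      show (p + 1) * (k + 1) - 1 = (p + 1) * k + p by rw [mul_add_one]; omega]

end CommRing

section CharZero

variable {K : Type*} [Field K] [CharZero K] {p : ℕ} {H : K⟦X⟧}

theorem coeff_pow_of_eq_one_add_X_mul_pow (hH : H = 1 + X * H ^ (p + 1)) (b k : ℕ) :
    coeff k (H ^ (b + 1)) = raneyNumber p b k := by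
  induction k generalizing b with
  | zero =>
    have hc : constantCoeff H = 1 := by simpa using congrArg constantCoeff hH
    rw [raneyNumber_zero, coeff_zero_eq_constantCoeff, map_pow, hc, one_pow, Rat.cast_one]
  | succ k ih =>
    induction b with
    | zero =>
      rw [raneyNumber_zero_succ, ← ih p, zero_add, pow_one]
      conv_lhs => rw [hH]
      simp
    | succ b ihb =>
      have hstep : H ^ (b + 1 + 1) = H ^ (b + 1) + X * H ^ (b + p + 1 + 1) := by
        linear_combination H ^ (b + 1) * hH
      rw [hstep, map_add, coeff_succ_X_mul, ihb, ih, raneyNumber_succ_succ, Rat.cast_add]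

theorem natCast_mul_chooseSeries (hH : H = 1 + X * H ^ (p + 1)) :
    (p + 1 : K⟦X⟧) * chooseSeries K p =
      (p + 1 : K⟦X⟧) * H ^ (p + 1) + (p : K⟦X⟧) * (X * d⁄dX K (H ^ (p + 1))) := by
  ext k
  have h := congrArg (Rat.cast : ℚ → K) (add_mul_raneyNumber_eq_mul_choose p k)
  push_cast at h
  rw [map_add, show (p + 1 : K⟦X⟧) = C (p + 1 : K) by simp,
    show (p : K⟦X⟧) = C (p : K) by simp,
    coeff_C_mul, coeff_C_mul, coeff_C_mul, coeff_X_mul_derivative,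
    coeff_pow_of_eq_one_add_X_mul_pow hH, chooseSeries, coeff_mk]
  linear_combination -h

theorem chooseSeries_mul_one_sub_eq_pow (hH : H = 1 + X * H ^ (p + 1)) :
    chooseSeries K p * (1 - (p + 1 : K⟦X⟧) * X * H ^ p) = H ^ p := by
  have hp : (p + 1 : K⟦X⟧) ≠ 0 := fun h =>
    Nat.cast_add_one_ne_zero p (by simpa using congrArg constantCoeff h)
  apply mul_left_cancel₀ hp
  have h := derivative_mul_one_sub_eq_pow hH
  rw [← mul_assoc, natCast_mul_chooseSeries hH, derivative_pow, Nat.add_sub_cancel]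
  push_cast
  linear_combination ((p : K⟦X⟧) + 1) * H ^ p * hH
    + (p : K⟦X⟧) * ((p : K⟦X⟧) + 1) * X * H ^ p * h

theorem X_mul_derivative_eq_X_mul_chooseSeries_mul (hH : H = 1 + X * H ^ (p + 1)) :
    X * d⁄dX K H = X * chooseSeries K p * H := by
  have hW : (1 - (p + 1 : K⟦X⟧) * X * H ^ p : K⟦X⟧) ≠ 0 := fun h => by
    simpa using congrArg constantCoeff h
  apply mul_right_cancel₀ hW
  linear_combination
    X * derivative_mul_one_sub_eq_pow hH - X * H * chooseSeries_mul_one_sub_eq_pow hH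

end CharZero

end PowerSeries

/-- For `l1, l2 ≥ 2`, `m = l1·l2 − l1 − l2`, and `H ∈ ℚ[[u]]` with `H·(1 − u·H^m) = 1`,
the series `f = H^(l1·l2)` satisfies `u·f' = g·f` where
`g = ∑_{k ≥ 1} l1·l2·binom((l1−1)(l2−1)k − 1, k−1)·u^k`. -/
theorem central_slope_GW_formula (l1 l2 : ℕ) (hl1 : 2 ≤ l1) (hl2 : 2 ≤ l2)
    (m : ℕ) (hm : m = l1 * l2 - l1 - l2)
    (H : PowerSeries ℚ) (hH : H * (1 - PowerSeries.X * H ^ m) = 1)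
    (f g : PowerSeries ℚ) (hf : f = H ^ (l1 * l2))
    (hg : g = PowerSeries.mk fun k =>
      if k = 0 then 0 else
        (l1 * l2 : ℚ) * (Nat.choose ((l1 - 1) * (l2 - 1) * k - 1) (k - 1) : ℚ)) :
    PowerSeries.X * (PowerSeries.derivative ℚ f) = g * f := by
  have hdeg : (l1 - 1) * (l2 - 1) = m + 1 := by
    obtain ⟨a, rfl⟩ : ∃ a, l1 = a + 2 := ⟨l1 - 2, by omega⟩
    obtain ⟨b, rfl⟩ : ∃ b, l2 = b + 2 := ⟨l2 - 2, by omega⟩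
    have h1 : (a + 2) * (b + 2) = a * b + 2 * a + 2 * b + 4 := by ring
    have h2 : (a + 2 - 1) * (b + 2 - 1) = a * b + a + b + 1 := by
      simp only [Nat.add_succ_sub_one]; ring
    omega
  have hH' : H = 1 + X * H ^ (m + 1) := by linear_combination hH
  rw [hg, hdeg, mk_ite_mul_choose_eq, hf,
    X_mul_derivative_pow (X_mul_derivative_eq_X_mul_chooseSeries_mul hH')]
  simp only [← map_natCast C, Nat.cast_mul]
  ring
end

section
/- Let l1 ≥ 2 and l2 ≥ 1 be integers and let y be a formal power series over ℚ in one variable x satisfying y = x·(1 + y^{l1−1})^{l2−1}. Then for every integer d ≥ 1, the coefficient of x^{(l1−1)·d+1} in y^{l1} equals (l1/((l1−1)·d+1)) · binomial((l1−1)·(l2−1)·d + l2 − 1, d−1). -/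
/-!
With `a = l1 - 1` and `b = l2 - 1`, `y` solves `y = X φ(y)` for `φ(t) = (1 + t^a)^b`, so by
Lagrange inversion `[x^n] y^k = (k/n) [t^(n-k)] φ(t)^n = (k/n) C(b n, m)` whenever `n = a m + k`.
This is proved directly by strong induction on `m`:
`[x^(a m + k)] y^k = [x^(a m)] (1 + y^a)^(b k)`, expanding binomially expresses this through the
coefficients `[x^(a m)] y^(a j) = (j/m) C(a b m, m - j)` known for `j ≥ 1`, and the resulting sum
`∑ C(b k, j) j C(a b m, m - j)` collapses by absorption and Vandermonde's identity.
-/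

open PowerSeries Finset

namespace Nat

theorem zero_choose_mul_self (j : ℕ) : (0 : ℕ).choose j * j = 0 := by
  cases j <;> simp

theorem add_mul_sum_range_choose_mul_mul_choose (N c m : ℕ) :
    (N + c) * ∑ j ∈ range (m + 1), c.choose j * j * N.choose (m - j) =
      c * m * (N + c).choose m := by
  rcases c with _ | c
  · simp [zero_choose_mul_self]
  rcases m with _ | m
  · simp
  have absorb (i : ℕ) : (c + 1).choose (i + 1) * (i + 1) * N.choose (m + 1 - (i + 1)) =
      (c + 1) * (c.choose i * N.choose (m - i)) := by
    rw [← add_one_mul_choose_eq, Nat.add_sub_add_right]; ring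
  have vandermonde : ∑ i ∈ range (m + 1), c.choose i * N.choose (m - i) = (c + N).choose m := by
    rw [add_choose_eq, Finset.Nat.sum_antidiagonal_eq_sum_range_succ_mk]
  rw [sum_range_succ', sum_congr rfl fun i _ => absorb i, ← mul_sum, vandermonde]
  have := add_one_mul_choose_eq (c + N) m
  rw [show c + N + 1 = N + (c + 1) by ring] at this
  simp only [Nat.mul_zero, Nat.zero_mul, Nat.add_zero]
  rw [← mul_assoc, mul_comm (N + _), mul_assoc, this]; ring


theorem mul_sum_range_choose_mul_mul_choose_eq (a b k m : ℕ) :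
    (a * m + k) * ∑ j ∈ range (m + 1), (b * k).choose j * j * (a * b * m).choose (m - j) =
      k * m * (b * (a * m + k)).choose m := by
  rcases b.eq_zero_or_pos with rfl | hb
  · cases m <;> simp [zero_choose_mul_self]
  refine Nat.eq_of_mul_eq_mul_left hb ?_
  have h := add_mul_sum_range_choose_mul_mul_choose (a * b * m) (b * k) m
  rw [show a * b * m + b * k = b * (a * m + k) by ring] at h
  rw [← mul_assoc, h]; ring

end Nat

namespace PowerSeries

section CommSemiring

variable {R : Type*} [CommSemiring R]

theorem coeff_pow_eq_zero_of_lt {y : R⟦X⟧} (hy : constantCoeff y = 0) {n k : ℕ} (h : n < k) :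
    coeff n (y ^ k) = 0 := by
  obtain ⟨g, rfl⟩ := X_dvd_iff.mpr hy
  rw [mul_pow, coeff_X_pow_mul', if_neg (by omega)]

theorem coeff_mul_one_add_pow_pow_eq_sum {y : R⟦X⟧} (hy : constantCoeff y = 0) {a : ℕ}
    (ha : a ≠ 0) (N m : ℕ) :
    coeff (a * m) ((1 + y ^ a) ^ N) =
      ∑ j ∈ range (m + 1), N.choose j * coeff (a * m) (y ^ (a * j)) := by
  have expand : coeff (a * m) ((1 + y ^ a) ^ N) =
      ∑ j ∈ range (N + 1), N.choose j * coeff (a * m) (y ^ (a * j)) := by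
    simp only [add_comm (1 : R⟦X⟧), add_pow, one_pow, mul_one, ← pow_mul, map_sum]
    refine sum_congr rfl fun j _ => ?_
    rw [← map_natCast (C (R := R)), coeff_mul_C, mul_comm]
  have extend {s : ℕ} (hsN : s ≤ N + m + 1)
      (hs : ∀ j, s ≤ j → (N.choose j : R) * coeff (a * m) (y ^ (a * j)) = 0) :
      ∑ j ∈ range s, (N.choose j : R) * coeff (a * m) (y ^ (a * j)) =
        ∑ j ∈ range (N + m + 1), N.choose j * coeff (a * m) (y ^ (a * j)) :=
    sum_subset (range_subset_range.mpr hsN) fun j _ hj => hs j (by simpa using hj)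
  rw [expand, extend (s := N + 1) (by omega), extend (s := m + 1) (by omega)]
  · intro j hj
    rw [coeff_pow_eq_zero_of_lt hy (Nat.mul_lt_mul_of_pos_left (by omega) (by omega)), mul_zero]
  · intro j hj
    rw [Nat.choose_eq_zero_of_lt (by omega), Nat.cast_zero, zero_mul]

end CommSemiring

section Field

variable {K : Type*} [Field K] [CharZero K]

theorem coeff_pow_of_eq_X_mul_one_add_pow_pow {a b : ℕ} (ha : a ≠ 0) {y : K⟦X⟧}
    (hy : y = X * (1 + y ^ a) ^ b) (m : ℕ) {k : ℕ} (hk : k ≠ 0) :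
    coeff (a * m + k) (y ^ k) = k / (a * m + k : K) * ((b * (a * m + k)).choose m : K) := by
  have hy0 : constantCoeff y = 0 := by rw [hy]; simp
  have shift (n k : ℕ) : coeff (n + k) (y ^ k) = coeff n ((1 + y ^ a) ^ (b * k)) := by
    rw [show y ^ k = X ^ k * (1 + y ^ a) ^ (b * k) by rw [pow_mul, ← mul_pow, ← hy],
      coeff_X_pow_mul]
  induction m using Nat.strong_induction_on generalizing k with
  | _ m ih =>
  rw [shift]
  rcases m.eq_zero_or_pos with rfl | hm
  · simp [hy0, ha, hk]
  have term (j : ℕ) (hj : j ≤ m) :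
      coeff (a * m) (y ^ (a * j)) = j / m * ((a * b * m).choose (m - j) : K) := by
    rcases j.eq_zero_or_pos with rfl | hj0
    · simp [coeff_one, ha, hm.ne']
    have h := ih (m - j) (by omega) (k := a * j) (by positivity)
    rw [← mul_add, Nat.sub_add_cancel hj, show b * (a * m) = a * b * m by ring] at h
    rw [h, Nat.cast_sub hj]
    push_cast
    field_simp
    ring
  rw [coeff_mul_one_add_pow_pow_eq_sum hy0 ha,
    sum_congr rfl fun j hj => by rw [term j (by simpa [Nat.lt_succ_iff] using hj)]]
  have pull_denominator : ∑ j ∈ range (m + 1), ((b * k).choose j : K) *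
      (j / m * ((a * b * m).choose (m - j) : K)) =
        (∑ j ∈ range (m + 1), ((b * k).choose j : K) * j * ((a * b * m).choose (m - j) : K)) /
          m := by
    rw [sum_div]
    exact sum_congr rfl fun _ _ => by ring
  rw [pull_denominator]
  have key := congrArg (Nat.cast : ℕ → K) (Nat.mul_sum_range_choose_mul_mul_choose_eq a b k m)
  push_cast at key
  have hm' : (m : K) ≠ 0 := Nat.cast_ne_zero.mpr hm.ne'
  have hn : (a * m + k : K) ≠ 0 := by exact_mod_cast (by omega : a * m + k ≠ 0)
  rw [div_mul_eq_mul_div, div_eq_div_iff hm' hn]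
  linear_combination key

end Field

end PowerSeries

theorem localization_tree_coeff_general (l1 l2 : ℕ) (hl1 : 2 ≤ l1)
    (y : PowerSeries ℚ) (hy : y = PowerSeries.X * (1 + y ^ (l1 - 1)) ^ (l2 - 1))
    (d : ℕ) (hd : 1 ≤ d) :
    PowerSeries.coeff ((l1 - 1) * d + 1) (y ^ l1) =
      ((l1 : ℚ) / ((l1 - 1) * d + 1 : ℚ)) *
        (Nat.choose ((l1 - 1) * (l2 - 1) * d + l2 - 1) (d - 1) : ℚ) := by
  obtain ⟨a, rfl⟩ : ∃ a, l1 = a + 1 := ⟨l1 - 1, by omega⟩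
  obtain ⟨m, rfl⟩ : ∃ m, d = m + 1 := ⟨d - 1, by omega⟩
  simp only [Nat.add_sub_cancel] at hy ⊢
  have index : a * (m + 1) + 1 = a * m + (a + 1) := by ring
  have top : a * (l2 - 1) * (m + 1) + l2 - 1 = (l2 - 1) * (a * m + (a + 1)) := by
    rcases l2 with _ | b
    · simp
    · rw [Nat.add_sub_cancel, ← add_assoc, Nat.add_sub_cancel]
      ring
  rw [index, coeff_pow_of_eq_X_mul_one_add_pow_pow (by omega) hy m (by omega), top]
  push_cast
  ring

/-- For `l1 ≥ 2`, `l2 ≥ 1`, and `y ∈ ℚ[[x]]` with `y = x·(1 + y^{l1−1})^{l2−1}`,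
the coefficient of `x^{(l1−1)d+1}` in `y^{l1}` equals
`(l1/((l1−1)d+1)) · binom((l1−1)(l2−1)d + l2 − 1, d−1)`. -/
theorem localization_tree_coeff (l1 l2 : ℕ) (hl1 : 2 ≤ l1) (hl2 : 1 ≤ l2)
    (y : PowerSeries ℚ) (hy : y = PowerSeries.X * (1 + y ^ (l1 - 1)) ^ (l2 - 1))
    (d : ℕ) (hd : 1 ≤ d) :
    PowerSeries.coeff ((l1 - 1) * d + 1) (y ^ l1) =
      ((l1 : ℚ) / ((l1 - 1) * d + 1 : ℚ)) *
        (Nat.choose ((l1 - 1) * (l2 - 1) * d + l2 - 1) (d - 1) : ℚ) :=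
  localization_tree_coeff_general l1 l2 hl1 y hy d hd
end

section
/- Let a ≥ 1, b ≥ 0 and c ≥ 1 be natural numbers and let y be a formal power series over ℚ in one variable x satisfying y = x·(1 + y^a)^b. Then for every natural number n ≥ c such that a divides n − c, the coefficient of x^n in y^c equals (c/n) · binomial(n·b, (n−c)/a). -/
/-!
Since `y ^ c = X ^ c * (1 + y ^ a) ^ (b * c)`, expanding the binomial expresses `[x^(a*m + c)] y ^ c`
through the coefficients `[x^(a*m)] y ^ (a*j)` with `0 < j ≤ m`, which are known by strong induction
on `m`. The recursion closes by the Vandermonde-type identity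
`∑ j * C(K, j) * C(N, m + 1 - j) = K * C(K + N - 1, m)`.
-/

open PowerSeries Finset

theorem Nat.sum_range_mul_choose_mul_choose (K N m : ℕ) :
    ∑ j ∈ range (m + 2), j * K.choose j * N.choose (m + 1 - j) = K * (K + N - 1).choose m := by
  rw [sum_range_succ']
  cases K with
  | zero => simp
  | succ k =>
    have hterm (i : ℕ) : (i + 1) * (k + 1).choose (i + 1) * N.choose (m + 1 - (i + 1)) =
        (k + 1) * (k.choose i * N.choose (m - i)) := by
      rw [Nat.add_sub_add_right, ← mul_assoc, mul_comm (i + 1), ← Nat.add_one_mul_choose_eq]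
    simp only [hterm, ← mul_sum, ← Nat.sum_antidiagonal_eq_sum_range_succ
      (fun i j => k.choose i * N.choose j), ← Nat.add_choose_eq]
    simp [Nat.add_right_comm k 1 N]

theorem Nat.mul_choose_sub_one (L m : ℕ) : L * (L - 1).choose m = (m + 1) * L.choose (m + 1) := by
  cases L with
  | zero => simp
  | succ L => rw [Nat.add_sub_cancel, Nat.add_one_mul_choose_eq, mul_comm]

theorem sum_range_choose_mul_div_mul_choose {R : Type*} [Field R] [CharZero R] (a b c m : ℕ)
    (hc : 0 < c) :
    ∑ j ∈ range (m + 2), ((b * c).choose j : R) *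
        ((j : R) / (m + 1 : ℕ) * (a * (m + 1) * b).choose (m + 1 - j)) =
      (c : R) / (a * (m + 1) + c : ℕ) * ((a * (m + 1) + c) * b).choose (m + 1) := by
  have hsum := Nat.sum_range_mul_choose_mul_choose (b * c) (a * (m + 1) * b) m
  rw [show b * c + a * (m + 1) * b = (a * (m + 1) + c) * b by ring] at hsum
  have hL := congrArg (Nat.cast (R := R)) (Nat.mul_choose_sub_one ((a * (m + 1) + c) * b) m)
  calc _ = ((∑ j ∈ range (m + 2), j * (b * c).choose j * (a * (m + 1) * b).choose (m + 1 - j) : ℕ)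
          : R) / (m + 1 : ℕ) := by
        rw [Nat.cast_sum, sum_div]
        refine sum_congr rfl fun j _ => ?_
        push_cast
        ring
    _ = _ := by
      rw [hsum, div_mul_eq_mul_div, div_eq_div_iff (Nat.cast_ne_zero.2 (by omega))
        (Nat.cast_ne_zero.2 (by omega))]
      push_cast at hL ⊢
      linear_combination (c : R) * hL

namespace PowerSeries

variable {R : Type*}

theorem coeff_pow_eq_zero_of_X_dvd [CommSemiring R] {y : R⟦X⟧} (hX : X ∣ y) {n c : ℕ}
    (h : n < c) : coeff n (y ^ c) = 0 :=
  X_pow_dvd_iff.mp (pow_dvd_pow_of_dvd hX c) n h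

theorem coeff_add_pow_eq_sum [CommSemiring R] {a b : ℕ} {y : R⟦X⟧}
    (hy : y = X * (1 + y ^ a) ^ b) (m c : ℕ) :
    coeff (m + c) (y ^ c) =
      ∑ j ∈ range (b * c + 1), ((b * c).choose j : R) * coeff m (y ^ (a * j)) := by
  conv_lhs => rw [hy, mul_pow, ← pow_mul, coeff_X_pow_mul, add_comm, add_pow]
  simp only [one_pow, mul_one, ← pow_mul, map_sum]
  refine sum_congr rfl fun j _ => ?_
  rw [← map_natCast (C (R := R)), coeff_mul_C, mul_comm]

theorem coeff_mul_add_pow [Field R] [CharZero R] {a b : ℕ} {y : R⟦X⟧} (ha : 0 < a)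
    (hy : y = X * (1 + y ^ a) ^ b) (m : ℕ) {c : ℕ} (hc : 0 < c) :
    coeff (a * m + c) (y ^ c) =
      (c : R) / (a * m + c : ℕ) * ((a * m + c) * b).choose m := by
  have hX : X ∣ y := ⟨_, hy⟩
  induction m using Nat.strong_induction_on generalizing c with
  | _ m ih =>
  rw [coeff_add_pow_eq_sum hy]
  rcases Nat.eq_zero_or_pos m with rfl | hm
  · rw [sum_eq_single 0 (fun j _ hj => by
      rw [coeff_pow_eq_zero_of_X_dvd hX (by positivity), mul_zero]) (by simp)]
    simp [hc.ne']
  have hcoeff (j : ℕ) (hj : j ≤ m) : coeff (a * m) (y ^ (a * j)) =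
      (j / m : R) * ((a * m * b).choose (m - j)) := by
    rcases Nat.eq_zero_or_pos j with rfl | hj0
    · simp [(by positivity : a * m ≠ 0)]
    have := ih (m - j) (by omega) (c := a * j) (by positivity)
    rw [← Nat.mul_add, Nat.sub_add_cancel hj] at this
    rw [this, Nat.cast_mul, Nat.cast_mul, mul_div_mul_left _ _ (Nat.cast_ne_zero.2 ha.ne')]
  have hterm_eq_zero (j : ℕ) (hj : m + 1 ≤ j) :
      ((b * c).choose j : R) * coeff (a * m) (y ^ (a * j)) = 0 := by
    rw [coeff_pow_eq_zero_of_X_dvd hX (by nlinarith), mul_zero]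
  have hsum_range : ∑ j ∈ range (b * c + 1), ((b * c).choose j : R) * coeff (a * m) (y ^ (a * j)) =
      ∑ j ∈ range (m + 1), ((b * c).choose j : R) * coeff (a * m) (y ^ (a * j)) := by
    rcases le_total (b * c + 1) (m + 1) with h | h
    · refine (eventually_constant_sum (fun j hj => ?_) h).symm
      rw [Nat.choose_eq_zero_of_lt (by omega), Nat.cast_zero, zero_mul]
    · exact eventually_constant_sum hterm_eq_zero h
  rw [hsum_range, sum_congr rfl fun j hj => by rw [hcoeff j (Nat.lt_succ_iff.mp (mem_range.mp hj))]]
  obtain ⟨m, rfl⟩ : ∃ k, m = k + 1 := Nat.exists_eq_add_one.mpr hm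
  exact sum_range_choose_mul_div_mul_choose a b c m hc

end PowerSeries

/-- Lagrange inversion for `y = x·(1+y^a)^b`: for `n ≥ c` with `a ∣ n − c`,
the coefficient of `x^n` in `y^c` equals `(c/n) · binom(n·b, (n−c)/a)`. -/
theorem lagrange_inversion_coeff (a b c : ℕ) (ha : 1 ≤ a) (hc : 1 ≤ c)
    (y : PowerSeries ℚ) (hy : y = PowerSeries.X * (1 + y ^ a) ^ b)
    (n : ℕ) (hn : c ≤ n) (hdvd : a ∣ n - c) :
    PowerSeries.coeff n (y ^ c) =
      ((c : ℚ) / (n : ℚ)) * (Nat.choose (n * b) ((n - c) / a) : ℚ) := by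
  obtain ⟨m, hm⟩ := hdvd
  obtain rfl : n = a * m + c := by omega
  rw [hm, Nat.mul_div_cancel_left m ha]
  exact coeff_mul_add_pow ha hy m hc
end

section
/- In the ring ℚ[[s₁,s₂,t₁,t₂,x,y]] of formal power series over ℚ in six variables, define for i,j ∈ {1,2} the series R_{ij} = (1 + s_i·t_j·x·y) · (1 − s₁s₂t₁t₂x²y²)^{-1}. Then (R_{ij}) is the unique quadruple of power series satisfying the system R_{11} = 1 + s₁t₁xy·R_{22}, R_{22} = 1 + s₂t₂xy·R_{11}, R_{12} = 1 + s₁t₂xy·R_{21}, R_{21} = 1 + s₂t₁xy·R_{12}; consequently R_{11}·R_{12}·R_{21}·R_{22} = (1+s₁t₁xy)(1+s₁t₂xy)(1+s₂t₁xy)(1+s₂t₂xy) · (1 − s₁s₂t₁t₂x²y²)^{-4}. -/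
/-!
With `a (i, j) = sᵢtⱼxy` and `σ (i, j) = (i + 1, j + 1)`, the product `a k * a (σ k)` is the same
series `q = s₁s₂t₁t₂x²y²` for every `k`, and `σ` is an involution. Substituting the equation at
`σ k` into the one at `k` gives `(1 - q) * R k = 1 + a k`, which determines `R k` because `q` has
zero constant term (already `x` does). The product formula is then a ring identity.
-/

open MvPowerSeries Function

section InvolutiveSystem

variable {R ι : Type*} [CommRing R] {σ : ι → ι} {a : ι → R} {q w : R}

theorem involutive_system_solution (ha : ∀ k, a k * a (σ k) = q) (hw : (1 - q) * w = 1)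
    (k : ι) : (1 + a k) * w = 1 + a k * ((1 + a (σ k)) * w) := by
  linear_combination hw - w * ha k

theorem eq_of_involutive_system (hσ : Involutive σ) (ha : ∀ k, a k * a (σ k) = q)
    (hw : (1 - q) * w = 1) {P : ι → R} (hP : ∀ k, P k = 1 + a k * P (σ k)) (k : ι) :
    P k = (1 + a k) * w := by
  have hPσ : P (σ k) = 1 + a (σ k) * P k := by rw [hP (σ k), hσ k]
  linear_combination w * hP k + (w * a k) * hPσ - P k * hw + (w * P k) * ha k

end InvolutiveSystem

theorem Fin.two_add_one_add_one (i : Fin 2) : i + 1 + 1 = i := by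
  revert i; decide

theorem Fin.two_mul_apply_add_one {M : Type*} [CommMagma M] (f : Fin 2 → M) (i : Fin 2) :
    f i * f (i + 1) = f 0 * f 1 := by
  fin_cases i
  · rfl
  · exact mul_comm _ _

/-- In `ℚ[[s₁,s₂,t₁,t₂,x,y]]`, the quadruple
`R_{ij} = (1 + sᵢtⱼxy)·(1 − s₁s₂t₁t₂x²y²)⁻¹` is the unique solution of the system
`R_{ij} = 1 + sᵢtⱼxy·R_{i+1,j+1}` (indices mod 2), and consequently
`∏ R_{ij} = ∏(1 + sᵢtⱼxy) · (1 − s₁s₂t₁t₂x²y²)⁻⁴`. -/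
theorem K22_small_length
    (s t : Fin 2 → MvPowerSeries (Fin 6) ℚ) (x y : MvPowerSeries (Fin 6) ℚ)
    (hx : x = MvPowerSeries.X 4)
    (R : Fin 2 → Fin 2 → MvPowerSeries (Fin 6) ℚ)
    (hR : R = fun i j =>
      (1 + s i * t j * x * y) * (1 - s 0 * s 1 * t 0 * t 1 * x ^ 2 * y ^ 2)⁻¹) :
    (∀ i j : Fin 2, R i j = 1 + s i * t j * x * y * R (i + 1) (j + 1)) ∧
    (∀ R' : Fin 2 → Fin 2 → MvPowerSeries (Fin 6) ℚ,
      (∀ i j : Fin 2, R' i j = 1 + s i * t j * x * y * R' (i + 1) (j + 1)) → R' = R) ∧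
    (R 0 0 * R 0 1 * R 1 0 * R 1 1 =
      (1 + s 0 * t 0 * x * y) * (1 + s 0 * t 1 * x * y) *
        (1 + s 1 * t 0 * x * y) * (1 + s 1 * t 1 * x * y) *
          ((1 - s 0 * s 1 * t 0 * t 1 * x ^ 2 * y ^ 2)⁻¹) ^ 4) := by
  set q := s 0 * s 1 * t 0 * t 1 * x ^ 2 * y ^ 2
  let σ : Fin 2 × Fin 2 → Fin 2 × Fin 2 := fun k => (k.1 + 1, k.2 + 1)
  have hσ : Involutive σ := fun k => by simp only [σ, Fin.two_add_one_add_one]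
  have ha : ∀ k, s k.1 * t k.2 * x * y * (s (σ k).1 * t (σ k).2 * x * y) = q := by
    rintro ⟨i, j⟩
    linear_combination (t j * t (j + 1) * x ^ 2 * y ^ 2) * Fin.two_mul_apply_add_one s i +
      (s 0 * s 1 * x ^ 2 * y ^ 2) * Fin.two_mul_apply_add_one t j
  have hw : (1 - q) * (1 - q)⁻¹ = 1 := MvPowerSeries.mul_inv_cancel _ (by simp [q, hx])
  refine ⟨fun i j => ?_, fun R' hR' => ?_, by rw [hR]; ring⟩
  · rw [hR]
    exact involutive_system_solution ha hw (i, j)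
  · funext i j
    rw [hR]
    exact eq_of_involutive_system hσ ha hw (P := fun k => R' k.1 k.2)
      (fun k => hR' k.1 k.2) (i, j)
end

section
/- Let l1, l2 ≥ 1 be integers. In the ring ℚ[[s₁,…,s_{l1}, t₁,…,t_{l2}, x, y]] of formal power series over ℚ, there exists exactly one family (R^{k,l}) indexed by k ∈ {1,…,l1}, l ∈ {1,…,l2} of power series satisfying, for all k and l, the equation R^{k,l} = 1 + s_k·t_l·x·y · ∏_{k' ≠ k} ∏_{l' ≠ l} R^{k',l'}. -/
/-!
Call two power series congruent to order `n` when their difference has order at least `n`.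
Since `s_k t_l x y` has no constant term, the right-hand side of the system turns congruence
to order `n` of two families into congruence to order `n + 1`. Hence two solutions are congruent
to every order, i.e. equal, and the iterates of the right-hand side starting from `0` stabilise
degree by degree to a solution.
-/

open Finset

namespace MvPowerSeries

variable {σ A : Type*}

section Ring

variable [Ring A]

theorem le_order_sub_of_le_order_sub {n : ℕ∞} {P Q S : MvPowerSeries σ A}
    (hPQ : n ≤ (P - Q).order) (hQS : n ≤ (Q - S).order) : n ≤ (P - S).order :=
  calc n ≤ min (P - Q).order (Q - S).order := le_min hPQ hQS
    _ ≤ (P - Q + (Q - S)).order := min_order_le_add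
    _ = (P - S).order := by rw [sub_add_sub_cancel]

theorem le_order_mul_sub_mul {n : ℕ∞} {P P' Q Q' : MvPowerSeries σ A}
    (hP : n ≤ (P - P').order) (hQ : n ≤ (Q - Q').order) : n ≤ (P * Q - P' * Q').order := by
  have hsplit : P * Q - P' * Q' = (P - P') * Q + P' * (Q - Q') := by noncomm_ring
  rw [hsplit]
  refine le_trans (le_min ?_ ?_) min_order_le_add
  · exact hP.trans (le_self_add.trans le_order_mul)
  · exact hQ.trans (le_add_self.trans le_order_mul)

theorem order_sub_comm (P Q : MvPowerSeries σ A) : (P - Q).order = (Q - P).order := by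
  rw [← order_neg, neg_sub]

theorem eq_of_forall_le_order_sub {P Q : MvPowerSeries σ A}
    (h : ∀ n : ℕ, (n : ℕ∞) ≤ (P - Q).order) : P = Q :=
  sub_eq_zero.mp (order_eq_top_iff.mp (ENat.eq_top_iff_forall_ge.mpr h))

theorem existsUnique_fixedPoint_of_le_order_sub {ι : Type*}
    {Φ : (ι → MvPowerSeries σ A) → ι → MvPowerSeries σ A}
    (hΦ : ∀ (n : ℕ) (F G : ι → MvPowerSeries σ A), (∀ i, (n : ℕ∞) ≤ (F i - G i).order) →
      ∀ i, (n : ℕ∞) + 1 ≤ (Φ F i - Φ G i).order) :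
    ∃! F, Φ F = F := by
  let u : ℕ → ι → MvPowerSeries σ A := fun n => Φ^[n] 0
  have hu_succ (n : ℕ) : u (n + 1) = Φ (u n) := Function.iterate_succ_apply' Φ n 0
  have hu_cauchy (n : ℕ) : ∀ m, n ≤ m → ∀ i, (n : ℕ∞) ≤ (u m i - u n i).order := by
    induction n with
    | zero => simp
    | succ n ih =>
      intro m hm i
      obtain ⟨m, rfl⟩ : ∃ m', m = m' + 1 := ⟨m - 1, by omega⟩
      rw [hu_succ, hu_succ, Nat.cast_succ]
      exact hΦ n _ _ (ih m (by omega)) i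
  -- `u n` is stable in degrees `< n`: read the degree-`d` coefficient off `u (d.degree + 1)`
  let L : ι → MvPowerSeries σ A := fun i d => coeff d (u (d.degree + 1) i)
  have hL (n : ℕ) (i : ι) : (n : ℕ∞) ≤ (u n i - L i).order :=
    nat_le_order fun d hd => coeff_of_lt_order (f := u n i - u (d.degree + 1) i)
      ((Nat.cast_lt.mpr d.degree.lt_succ_self).trans_le (hu_cauchy _ n hd i))
  have hfix : Φ L = L := by
    funext i
    refine eq_of_forall_le_order_sub fun n => le_order_sub_of_le_order_sub (Q := u (n + 1) i) ?_ ?_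
    · rw [hu_succ]
      exact le_self_add.trans (hΦ n _ _ (fun j => order_sub_comm (u n j) (L j) ▸ hL n j) i)
    · exact (Nat.cast_le.mpr n.le_succ).trans (hL (n + 1) i)
  refine ⟨L, hfix, fun G hG => funext fun i => eq_of_forall_le_order_sub fun n => ?_⟩
  induction n generalizing i with
  | zero => simp
  | succ n ih =>
    rw [← hG, ← hfix, Nat.cast_succ]
    exact hΦ n G L ih i

end Ring

section CommRing

variable [CommRing A]

theorem le_order_prod_sub_prod {ι : Type*} {s : Finset ι} {f g : ι → MvPowerSeries σ A}
    {n : ℕ∞} (h : ∀ i ∈ s, n ≤ (f i - g i).order) :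
    n ≤ (∏ i ∈ s, f i - ∏ i ∈ s, g i).order := by
  classical
  induction s using Finset.induction_on with
  | empty => simp
  | insert a s ha ih =>
    rw [prod_insert ha, prod_insert ha]
    exact le_order_mul_sub_mul (h a (mem_insert_self a s))
      (ih fun i hi => h i (mem_insert_of_mem hi))

theorem existsUnique_eq_one_add_mul_prod_erase_prod_erase {ι κ : Type*} [Fintype ι]
    [Fintype κ] [DecidableEq ι] [DecidableEq κ] {M : ι → κ → MvPowerSeries σ A}
    (hM : ∀ i j, constantCoeff (M i j) = 0) :
    ∃! R : ι → κ → MvPowerSeries σ A, ∀ i j,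
      R i j = 1 + M i j * ∏ i' ∈ univ.erase i, ∏ j' ∈ univ.erase j, R i' j' := by
  let Φ : (ι × κ → MvPowerSeries σ A) → ι × κ → MvPowerSeries σ A := fun F p =>
    1 + M p.1 p.2 * ∏ i' ∈ univ.erase p.1, ∏ j' ∈ univ.erase p.2, F (i', j')
  have hΦ (n : ℕ) (F G : ι × κ → MvPowerSeries σ A) (hFG : ∀ p, (n : ℕ∞) ≤ (F p - G p).order)
      (p : ι × κ) : (n : ℕ∞) + 1 ≤ (Φ F p - Φ G p).order := by
    have hprod := le_order_prod_sub_prod (s := univ.erase p.1) fun i' _ =>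
      le_order_prod_sub_prod (s := univ.erase p.2) fun j' _ => hFG (i', j')
    calc (n : ℕ∞) + 1 ≤ (M p.1 p.2).order + _ := by
          rw [add_comm]
          exact add_le_add (one_le_order_iff_constCoeff_eq_zero.mpr (hM _ _)) hprod
      _ ≤ _ := le_order_mul
      _ = (Φ F p - Φ G p).order := by simp only [Φ, add_sub_add_left_eq_sub, mul_sub]
  refine ((Equiv.curry _ _ _).existsUnique_congr fun F => ?_).mp
    (existsUnique_fixedPoint_of_le_order_sub hΦ)
  simp [Φ, funext_iff, Prod.forall, eq_comm]

end CommRing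

end MvPowerSeries

theorem central_slope_system_unique_general (l1 l2 : ℕ)
    (s : Fin l1 → MvPowerSeries (Fin l1 ⊕ Fin l2 ⊕ Fin 2) ℚ)
    (t : Fin l2 → MvPowerSeries (Fin l1 ⊕ Fin l2 ⊕ Fin 2) ℚ)
    (x y : MvPowerSeries (Fin l1 ⊕ Fin l2 ⊕ Fin 2) ℚ)
    (hs : s = fun k => MvPowerSeries.X (Sum.inl k))
    (ht : t = fun l => MvPowerSeries.X (Sum.inr (Sum.inl l)))
    (hx : x = MvPowerSeries.X (Sum.inr (Sum.inr 0)))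
    (hy : y = MvPowerSeries.X (Sum.inr (Sum.inr 1))) :
    ∃! R : Fin l1 → Fin l2 → MvPowerSeries (Fin l1 ⊕ Fin l2 ⊕ Fin 2) ℚ,
      ∀ (k : Fin l1) (l : Fin l2),
        R k l = 1 + s k * t l * x * y *
          ∏ k' ∈ Finset.univ.erase k, ∏ l' ∈ Finset.univ.erase l, R k' l' := by
  subst hs ht hx hy
  exact MvPowerSeries.existsUnique_eq_one_add_mul_prod_erase_prod_erase fun k l => by simp

/-- Central-slope functional equation system: in
`ℚ[[s₁,…,s_{l1},t₁,…,t_{l2},x,y]]` there is exactly one family `(R^{k,l})`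
satisfying `R^{k,l} = 1 + s_k·t_l·x·y·∏_{k'≠k}∏_{l'≠l} R^{k',l'}`. -/
theorem central_slope_system_unique (l1 l2 : ℕ) (hl1 : 1 ≤ l1) (hl2 : 1 ≤ l2)
    (s : Fin l1 → MvPowerSeries (Fin l1 ⊕ Fin l2 ⊕ Fin 2) ℚ)
    (t : Fin l2 → MvPowerSeries (Fin l1 ⊕ Fin l2 ⊕ Fin 2) ℚ)
    (x y : MvPowerSeries (Fin l1 ⊕ Fin l2 ⊕ Fin 2) ℚ)
    (hs : s = fun k => MvPowerSeries.X (Sum.inl k))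
    (ht : t = fun l => MvPowerSeries.X (Sum.inr (Sum.inl l)))
    (hx : x = MvPowerSeries.X (Sum.inr (Sum.inr 0)))
    (hy : y = MvPowerSeries.X (Sum.inr (Sum.inr 1))) :
    ∃! R : Fin l1 → Fin l2 → MvPowerSeries (Fin l1 ⊕ Fin l2 ⊕ Fin 2) ℚ,
      ∀ (k : Fin l1) (l : Fin l2),
        R k l = 1 + s k * t l * x * y *
          ∏ k' ∈ Finset.univ.erase k, ∏ l' ∈ Finset.univ.erase l, R k' l' :=
  central_slope_system_unique_general l1 l2 s t x y hs ht hx hy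
end

section
/- Let m ≥ 2 be an integer, let d, e : Fin m → ℕ, and set b = ∑_j d(j) and a = ∑_i e(i). If, as integers, (∑_j d(j)²) + (∑_i e(i)²) − a·b ≤ 1, then a² + b² − m·a·b ≤ 1. -/
set_option maxHeartbeats 1000000

/-- Tangent-line/convexity bound: for naturals `d j` summing to `b`,
`m * ∑ d j ^ 2 ≥ b ^ 2 + r * (m - r)` where `r = b % m`. -/
lemma key_sum_sq (m : ℕ) (d : Fin m → ℕ) (b : ℕ) (hb : b = ∑ j, d j) :
    (b : ℤ) ^ 2 + ((b % m : ℕ) : ℤ) * ((m : ℤ) - ((b % m : ℕ) : ℤ))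
      ≤ (m : ℤ) * ∑ j, (d j : ℤ) ^ 2 := by
  set q : ℤ := ((b / m : ℕ) : ℤ) with hq
  set r : ℤ := ((b % m : ℕ) : ℤ) with hr
  have hdm : (m : ℤ) * q + r = (b : ℤ) := by
    rw [hq, hr]
    exact_mod_cast Nat.div_add_mod b m
  have hbz : (b : ℤ) = ∑ j, (d j : ℤ) := by
    rw [hb]; push_cast; rfl
  have hpt : ∀ j, (0 : ℤ) ≤ ((d j : ℤ) - q) * ((d j : ℤ) - q - 1) := by
    intro j
    rcases le_or_gt ((d j : ℤ)) q with hle | hlt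
    · nlinarith
    · exact mul_nonneg (by linarith) (by linarith)
  have hsum : (0 : ℤ) ≤ ∑ j, ((d j : ℤ) - q) * ((d j : ℤ) - q - 1) :=
    Finset.sum_nonneg fun j _ => hpt j
  have hexp : ∑ j, ((d j : ℤ) - q) * ((d j : ℤ) - q - 1)
      = (∑ j, (d j : ℤ) ^ 2) - (2 * q + 1) * (b : ℤ) + (m : ℤ) * (q * (q + 1)) := by
    have : ∀ j ∈ Finset.univ, ((d j : ℤ) - q) * ((d j : ℤ) - q - 1)
        = (d j : ℤ) ^ 2 - (2 * q + 1) * (d j : ℤ) + q * (q + 1) := by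
      intro j _; ring
    rw [Finset.sum_congr rfl this, Finset.sum_add_distrib, Finset.sum_sub_distrib,
      ← Finset.mul_sum, Finset.sum_const, Finset.card_univ, Fintype.card_fin, ← hbz]
    ring
  rw [hexp] at hsum
  nlinarith [hsum, hdm, sq_nonneg r]

/-- If the Tits form of a dimension vector of `K(m,m)` of Kronecker type `(b,a)` is
at most `1`, then the Tits form of `(b,a)` for the `m`-Kronecker quiver is at most `1`. -/
theorem root_transfer_Kmm_to_Km (m : ℕ) (hm : 2 ≤ m) (d e : Fin m → ℕ)
    (b a : ℕ) (hb : b = ∑ j, d j) (ha : a = ∑ i, e i)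
    (h : (∑ j, (d j : ℤ) ^ 2) + (∑ i, (e i : ℤ) ^ 2) - (a : ℤ) * (b : ℤ) ≤ 1) :
    (a : ℤ) ^ 2 + (b : ℤ) ^ 2 - (m : ℤ) * a * b ≤ 1 := by
  have hmz : (2 : ℤ) ≤ (m : ℤ) := by exact_mod_cast hm
  have h1 := key_sum_sq m d b hb
  have h2 := key_sum_sq m e a ha
  set r : ℤ := ((b % m : ℕ) : ℤ) with hrdef
  set s : ℤ := ((a % m : ℕ) : ℤ) with hsdef
  have hr0 : 0 ≤ r := by positivity
  have hs0 : 0 ≤ s := by positivity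
  have hrm : r < (m : ℤ) := by
    rw [hrdef]; exact_mod_cast Nat.mod_lt b (show 0 < m by omega)
  have hsm : s < (m : ℤ) := by
    rw [hsdef]; exact_mod_cast Nat.mod_lt a (show 0 < m by omega)
  -- combined inequality
  have hc : (a : ℤ) ^ 2 + (b : ℤ) ^ 2 - (m : ℤ) * a * b
      ≤ (m : ℤ) - r * ((m : ℤ) - r) - s * ((m : ℤ) - s) := by
    nlinarith [h, h1, h2, hmz]
  rcases eq_or_lt_of_le hr0 with hr | hr
  · rcases eq_or_lt_of_le hs0 with hs | hs
    · -- both divisible by m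
      have hbq : (b : ℤ) = (m : ℤ) * ((b / m : ℕ) : ℤ) := by
        have := Nat.div_add_mod b m
        have h' : (m : ℤ) * ((b / m : ℕ) : ℤ) + r = (b : ℤ) := by
          rw [hrdef]; exact_mod_cast this
        linarith [h', hr]
      have haq : (a : ℤ) = (m : ℤ) * ((a / m : ℕ) : ℤ) := by
        have := Nat.div_add_mod a m
        have h' : (m : ℤ) * ((a / m : ℕ) : ℤ) + s = (a : ℤ) := by
          rw [hsdef]; exact_mod_cast this
        linarith [h', hs]
      set B : ℤ := ((b / m : ℕ) : ℤ)
      set A : ℤ := ((a / m : ℕ) : ℤ)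
      have hc' : (m : ℤ) ^ 2 * (A ^ 2 + B ^ 2 - (m : ℤ) * A * B) ≤ (m : ℤ) := by
        have := hc
        rw [hbq, haq] at this
        nlinarith [this, hr, hs]
      have ht : A ^ 2 + B ^ 2 - (m : ℤ) * A * B ≤ 0 := by
        by_contra hcon
        push_neg at hcon
        have h1' : (1 : ℤ) ≤ A ^ 2 + B ^ 2 - (m : ℤ) * A * B := hcon
        nlinarith [hc', h1', hmz]
      have hfin : (m : ℤ) ^ 2 * (A ^ 2 + B ^ 2 - (m : ℤ) * A * B) ≤ 0 :=
        mul_nonpos_of_nonneg_of_nonpos (sq_nonneg _) ht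
      rw [hbq, haq]
      nlinarith [hfin]
    · -- r = 0, s ≥ 1
      have hs1 : 1 ≤ s := by omega
      rw [← hr] at hc
      nlinarith [hc, mul_nonneg (by linarith : (0:ℤ) ≤ s - 1) (by linarith : (0:ℤ) ≤ (m:ℤ) - 1 - s)]
  · rcases eq_or_lt_of_le hs0 with hs | hs
    · have hr1 : 1 ≤ r := by omega
      rw [← hs] at hc
      nlinarith [hc, mul_nonneg (by linarith : (0:ℤ) ≤ r - 1) (by linarith : (0:ℤ) ≤ (m:ℤ) - 1 - r)]
    · have hr1 : 1 ≤ r := by omega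
      have hs1 : 1 ≤ s := by omega
      nlinarith [hc,
        mul_nonneg (by linarith : (0:ℤ) ≤ r - 1) (by linarith : (0:ℤ) ≤ (m:ℤ) - 1 - r),
        mul_nonneg (by linarith : (0:ℤ) ≤ s - 1) (by linarith : (0:ℤ) ≤ (m:ℤ) - 1 - s)]
end

section
/- Let m ≥ 2 be an integer and let r be an integer not divisible by m. If s : Fin m → ℤ satisfies s(j) ≡ r (mod m) for every j and ∑_j s(j) = 0, then ∑_j s(j)² ≥ m·(m−1). -/
/-- If `m` integers, all congruent to a residue `r` not divisible by `m`,
sum to zero, then the sum of their squares is at least `m(m−1)`. -/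
theorem deviation_square_bound (m : ℕ) (hm : 2 ≤ m) (r : ℤ) (hr : ¬ (m : ℤ) ∣ r)
    (s : Fin m → ℤ) (hcong : ∀ j, s j ≡ r [ZMOD m]) (hsum : ∑ j, s j = 0) :
    (m : ℤ) * (m - 1) ≤ ∑ j, (s j) ^ 2 := by
  set a : ℤ := r % (m : ℤ) with ha
  have hm0 : (0:ℤ) < (m:ℤ) := by positivity
  have ha0 : 0 ≤ a := Int.emod_nonneg r (by positivity)
  have ham : a < (m:ℤ) := Int.emod_lt_of_pos r hm0
  have hane : a ≠ 0 := fun h => hr (Int.dvd_of_emod_eq_zero h)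
  have ha1 : 1 ≤ a := lt_of_le_of_ne ha0 (Ne.symm hane)
  -- pointwise inequality
  have hpt : ∀ j, 0 ≤ (s j - a) * (s j - a + m) := by
    intro j
    have hd : (m:ℤ) ∣ s j - a := Int.dvd_self_sub_of_emod_eq (hcong j)
    obtain ⟨t, ht⟩ := hd
    have htt : 0 ≤ t * (t + 1) := by
      rcases le_or_gt 0 t with h | h
      · positivity
      · have : t + 1 ≤ 0 := h
        nlinarith
    have : (s j - a) * (s j - a + m) = (m:ℤ)^2 * (t * (t+1)) := by
      rw [ht]; ring
    rw [this]
    positivity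
  have hsumpt : 0 ≤ ∑ j, (s j - a) * (s j - a + m) := Finset.sum_nonneg fun j _ => hpt j
  have hexp : ∑ j, (s j - a) * (s j - a + m)
      = ∑ j, (s j)^2 + ((m:ℤ) - 2*a) * ∑ j, s j + (m:ℤ) * (a^2 - a*m) := by
    rw [Finset.mul_sum, ← Finset.sum_add_distrib]
    have hcard : ((Finset.univ : Finset (Fin m)).card : ℤ) = (m : ℤ) := by simp
    calc ∑ j, (s j - a) * (s j - a + m)
        = ∑ j, (((s j)^2 + ((m:ℤ) - 2*a) * s j) + (a^2 - a*m)) := by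
          apply Finset.sum_congr rfl; intro j _; ring
      _ = (∑ j, ((s j)^2 + ((m:ℤ) - 2*a) * s j)) + ((Finset.univ : Finset (Fin m)).card : ℤ) * (a^2 - a*m) := by
          rw [Finset.sum_add_distrib, Finset.sum_const, nsmul_eq_mul]
      _ = _ := by rw [hcard]
  rw [hexp, hsum, mul_zero, add_zero] at hsumpt
  have key : (m:ℤ) * (a * ((m:ℤ) - a)) ≤ ∑ j, (s j)^2 := by nlinarith
  have hfac : (m:ℤ) - 1 ≤ a * ((m:ℤ) - a) := by nlinarith [mul_nonneg (sub_nonneg.mpr ha1) (sub_nonneg.mpr (by linarith : a ≤ (m:ℤ) - 1))]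
  nlinarith
end
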